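/- For G = GL_{n+1}(ℝ), H = GL_n(ℝ) embedded as diag(h,1), the restriction map rest_k : f ↦ (h ↦ f(diag(h,1)·x_k)) maps the principal series π_{ξ,λ} of G to the principal series τ_{η_k(ξ), ν_k(λ)} of H, i.e., if f : G → ℂ satisfies f(g·man) = ∏_i |m_ia_i|_{ξ_i}^{−λ_i−ρ_i} f(g) for the upper-triangular Borel of G, then rest_k f satisfies the corresponding covariance for the upper-triangular Borel of H with parameters η_k(ξ) = (ξ_1,…,ξ_k, ξ_{k+2},…,ξ_{n+1}) and ν_k(λ) = (λ_1+½,…,λ_k+½, λ_{k+2}−½,…,λ_{n+1}−½), and rest_k is H-equivariant for the left regular actions. -/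

import Mathlib

/-!
The permutation matrix `x_k` is `τ⁻¹.permMatrix` for the permutation `τ` of `Fin (n+1)` sending
`k` to the last index and `k.succAbove i` to `i`, so `A * x_k = x_k * A.submatrix τ τ`. Hence
`diag(g d u, 1) x_k = diag(g, 1) x_k · d' u'` with `d' = (d, 1) ∘ τ` and `u' = diag(u, 1)`
conjugated by `τ`. `u'` is again upper unitriangular because `τ` is increasing away from `k` and
`diag(u, 1)` has trivial last row and column. The entry of `d'` at `k` is `1`, so the `k`-th factor
of the character of `π_{ξ,λ}` drops out, and at the other positions `ρ_G` and `ρ_H` differ by `±½`,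
which is the shift `λ ↦ ν_k(λ)`. Equivariance is `diag(h₀h, 1) = diag(h₀, 1) diag(h, 1)`.
-/

open Matrix

/-- The embedding `GL_n(ℝ) → GL_{n+1}(ℝ)`, `h ↦ diag(h,1)`. -/
def embH (n : ℕ) (h : Matrix (Fin n) (Fin n) ℝ) : Matrix (Fin (n+1)) (Fin (n+1)) ℝ :=
  fun i j =>
    if hi : (i : ℕ) < n then
      if hj : (j : ℕ) < n then h ⟨i, hi⟩ ⟨j, hj⟩ else 0
    else if (j : ℕ) < n then 0 else 1

/-- The permutation matrix `x_k` with block form `[[I_k,0,0],[0,0,I_{n-k}],[0,1,0]]`. -/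
def xmat (n k : ℕ) : Matrix (Fin (n+1)) (Fin (n+1)) ℝ :=
  fun i j =>
    if ((i : ℕ) < k ∧ j = i) ∨ (k ≤ (i : ℕ) ∧ (i : ℕ) < n ∧ (j : ℕ) = (i : ℕ) + 1)
        ∨ ((i : ℕ) = n ∧ (j : ℕ) = k) then 1 else 0

/-- `f : GL_m(ℝ) → ℂ` lies in the principal series `π_{ξ,λ}` (smooth normalized induction from
the upper triangular Borel): `f(g·man) = ∏ᵢ |dᵢ|^{−λᵢ−ρᵢ}_{ξᵢ} f(g)`, where
`ρᵢ = (m−1−2i)/2` (0-based) and `|x|^λ_ξ = sgn(x)^ξ |x|^λ`. -/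
def PS (m : ℕ) (ξ : Fin m → ℕ) (lam : Fin m → ℂ)
    (f : Matrix (Fin m) (Fin m) ℝ → ℂ) : Prop :=
  ∀ (g u : Matrix (Fin m) (Fin m) ℝ) (d : Fin m → ℝ),
    (∀ i, d i ≠ 0) → u.BlockTriangular id → (∀ i, u i i = 1) →
    f (g * (Matrix.diagonal d * u))
      = (∏ i, (Real.sign (d i) : ℂ) ^ (ξ i)
          * ((|d i| : ℝ) : ℂ) ^ (-(lam i) - ((m : ℂ) - 1 - 2 * (i : ℕ)) / 2)) * f g

/-- The restriction operator `rest_k f (h) = f(diag(h,1)·x_k)`. -/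
def restk (n k : ℕ) (f : Matrix (Fin (n+1)) (Fin (n+1)) ℝ → ℂ)
    (h : Matrix (Fin n) (Fin n) ℝ) : ℂ :=
  f (embH n h * xmat n k)

/-- `η_k(ξ) = (ξ_1,…,ξ_k, ξ_{k+2},…,ξ_{n+1})`. -/
def etak (n k : ℕ) (ξ : Fin (n+1) → ℕ) : Fin n → ℕ :=
  fun i => if (i : ℕ) < k then ξ i.castSucc else ξ i.succ

/-- `ν_k(λ) = (λ_1+½,…,λ_k+½, λ_{k+2}−½,…,λ_{n+1}−½)`. -/
noncomputable def nuk (n k : ℕ) (lam : Fin (n+1) → ℂ) : Fin n → ℂ :=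
  fun i => if (i : ℕ) < k then lam i.castSucc + 1/2 else lam i.succ - 1/2

lemma Matrix.mul_permMatrix_eq_permMatrix_mul_submatrix {ι R : Type*} [Fintype ι]
    [DecidableEq ι] [NonAssocSemiring R] (σ : Equiv.Perm ι) (M : Matrix ι ι R) :
    M * σ.permMatrix R = σ.permMatrix R * M.submatrix σ.symm σ.symm := by
  rw [PEquiv.mul_toMatrix_toPEquiv, PEquiv.toMatrix_toPEquiv_mul, submatrix_submatrix,
    Equiv.symm_comp_self]
  rfl

section Restriction

variable {n : ℕ}

@[simp]
lemma embH_castSucc_castSucc (h : Matrix (Fin n) (Fin n) ℝ) (i j : Fin n) :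
    embH n h i.castSucc j.castSucc = h i j := by
  simp [embH]

@[simp]
lemma embH_castSucc_last (h : Matrix (Fin n) (Fin n) ℝ) (i : Fin n) :
    embH n h i.castSucc (Fin.last n) = 0 := by
  simp [embH]

@[simp]
lemma embH_last_castSucc (h : Matrix (Fin n) (Fin n) ℝ) (j : Fin n) :
    embH n h (Fin.last n) j.castSucc = 0 := by
  simp [embH]

@[simp]
lemma embH_last_last (h : Matrix (Fin n) (Fin n) ℝ) :
    embH n h (Fin.last n) (Fin.last n) = 1 := by
  simp [embH]

lemma embH_mul (a b : Matrix (Fin n) (Fin n) ℝ) : embH n (a * b) = embH n a * embH n b := by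
  ext i j
  induction i using Fin.lastCases <;> induction j using Fin.lastCases <;>
    simp [Matrix.mul_apply, Fin.sum_univ_castSucc]

lemma embH_diagonal (d : Fin n → ℝ) :
    embH n (diagonal d) = diagonal (Fin.snoc (α := fun _ => ℝ) d 1) := by
  ext i j
  induction i using Fin.lastCases <;> induction j using Fin.lastCases <;>
    simp [diagonal_apply, (Fin.castSucc_ne_last _).symm]

lemma embH_apply_self {u : Matrix (Fin n) (Fin n) ℝ} (hu : ∀ i, u i i = 1) (i : Fin (n + 1)) :
    embH n u i i = 1 := by
  induction i using Fin.lastCases <;> simp [hu]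

def xPerm (p : Fin (n + 1)) : Equiv.Perm (Fin (n + 1)) :=
  (finSuccEquiv' p).trans (finSuccEquiv' (Fin.last n)).symm

@[simp]
lemma xPerm_self (p : Fin (n + 1)) : xPerm p p = Fin.last n := by
  simp [xPerm]

@[simp]
lemma xPerm_succAbove (p : Fin (n + 1)) (i : Fin n) : xPerm p (p.succAbove i) = i.castSucc := by
  simp [xPerm]

lemma xmat_eq_permMatrix (p : Fin (n + 1)) : xmat n p = (xPerm p)⁻¹.permMatrix ℝ := by
  ext i j
  simp only [Equiv.Perm.permMatrix, PEquiv.toMatrix_toPEquiv_apply, Pi.single_apply,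
    Equiv.Perm.eq_inv_iff_eq]
  refine Fin.succAboveCases p ?_ (fun b => ?_) j
  · rw [xPerm_self]
    simp only [xmat, Fin.ext_iff]
    grind
  · rw [xPerm_succAbove, Fin.succAbove]
    simp only [xmat, Fin.ext_iff, Fin.lt_def]
    grind

lemma mul_xmat (p : Fin (n + 1)) (A : Matrix (Fin (n + 1)) (Fin (n + 1)) ℝ) :
    A * xmat n p = xmat n p * A.submatrix (xPerm p) (xPerm p) := by
  rw [xmat_eq_permMatrix, mul_permMatrix_eq_permMatrix_mul_submatrix]
  rfl

lemma embH_borel_mul_xmat (p : Fin (n + 1)) (g u : Matrix (Fin n) (Fin n) ℝ) (d : Fin n → ℝ) :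
    embH n (g * (diagonal d * u)) * xmat n p
      = embH n g * xmat n p * (diagonal (Fin.snoc (α := fun _ => ℝ) d 1 ∘ xPerm p)
        * (embH n u).submatrix (xPerm p) (xPerm p)) := by
  rw [embH_mul, embH_mul, embH_diagonal, Matrix.mul_assoc, mul_xmat, Matrix.mul_assoc,
    ← submatrix_diagonal_equiv, submatrix_mul_equiv]

lemma blockTriangular_embH_submatrix_xPerm (p : Fin (n + 1)) {u : Matrix (Fin n) (Fin n) ℝ}
    (hu : u.BlockTriangular id) :
    ((embH n u).submatrix (xPerm p) (xPerm p)).BlockTriangular id := by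
  intro i j
  refine Fin.succAboveCases p ?_ (fun a => ?_) i <;>
    refine Fin.succAboveCases p ?_ (fun b => ?_) j <;> intro hji
  · exact absurd hji (lt_irrefl _)
  · simp
  · simp
  · simpa using hu (Fin.succAbove_lt_succAbove_iff.mp hji)

-- `PS m ξ lam f` unfolds to `f (g * (diagonal d * u)) = psChar m ξ lam d * f g`.
noncomputable def psChar (m : ℕ) (ξ : Fin m → ℕ) (lam : Fin m → ℂ) (d : Fin m → ℝ) : ℂ :=
  ∏ i, (Real.sign (d i) : ℂ) ^ (ξ i)
    * ((|d i| : ℝ) : ℂ) ^ (-(lam i) - ((m : ℂ) - 1 - 2 * (i : ℕ)) / 2)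

lemma psChar_snoc_comp_xPerm (p : Fin (n + 1)) (ξ : Fin (n + 1) → ℕ) (lam : Fin (n + 1) → ℂ)
    (d : Fin n → ℝ) :
    psChar (n + 1) ξ lam (Fin.snoc (α := fun _ => ℝ) d 1 ∘ xPerm p)
      = psChar n (etak n p ξ) (nuk n p lam) d := by
  rw [psChar, Fin.prod_univ_succAbove _ p]
  simp only [Function.comp_apply, xPerm_self, xPerm_succAbove, Fin.snoc_last, Fin.snoc_castSucc,
    Real.sign_one, abs_one, Complex.ofReal_one, one_pow, Complex.one_cpow, one_mul]
  refine Finset.prod_congr rfl fun i _ => ?_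
  by_cases h : (i : ℕ) < p
  · have hs : p.succAbove i = i.castSucc := Fin.succAbove_of_castSucc_lt _ _ h
    simp only [etak, nuk, h, if_true, hs, Fin.val_castSucc]
    congr 2
    push_cast
    ring
  · have hs : p.succAbove i = i.succ :=
      Fin.succAbove_of_le_castSucc _ _ (by simpa [Fin.le_def] using h)
    simp only [etak, nuk, h, if_false, hs, Fin.val_succ]
    congr 2
    push_cast
    ring

end Restriction

/-- The restriction operator `rest_k` maps `π_{ξ,λ}` to `τ_{η_k(ξ),ν_k(λ)}` and is
`H`-equivariant for the left regular actions. -/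
theorem stmt10 (n k : ℕ) (hk : k ≤ n) (ξ : Fin (n+1) → ℕ) (lam : Fin (n+1) → ℂ)
    (f : Matrix (Fin (n+1)) (Fin (n+1)) ℝ → ℂ) (hf : PS (n+1) ξ lam f) :
    PS n (etak n k ξ) (nuk n k lam) (restk n k f)
    ∧ ∀ h0 h : Matrix (Fin n) (Fin n) ℝ,
        restk n k f (h0 * h) = restk n k (fun g => f (embH n h0 * g)) h := by
  obtain ⟨p, rfl⟩ : ∃ p : Fin (n + 1), (p : ℕ) = k := ⟨⟨k, Nat.lt_succ_of_le hk⟩, rfl⟩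
  refine ⟨fun g u d hd hu hu1 => ?_, fun h0 h => by simp only [restk, embH_mul, Matrix.mul_assoc]⟩
  have hsnoc : ∀ j, Fin.snoc (α := fun _ => ℝ) d 1 j ≠ 0 :=
    Fin.lastCases (by simp) (by simpa using hd)
  rw [restk, embH_borel_mul_xmat, hf _ _ (Fin.snoc d 1 ∘ xPerm p) (fun j => hsnoc _)
    (blockTriangular_embH_submatrix_xPerm p hu) (fun i => embH_apply_self hu1 _), restk]
  exact congrArg (· * _) (psChar_snoc_comp_xPerm p ξ lam d)
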